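/- Let (A, μ, α) be a W*-dynamical system. In the GNS representation, set θ_g(a) = U_g a U_g* for a ∈ π_μ(A), and let H₀ ⊆ H_μ be the closed span of the eigenvectors of U. Then T := {a ∈ π_μ(A) : aΩ_μ ∈ H₀} is a weakly closed linear subspace of B(H_μ) which satisfies θ_g(T) = T for all g ∈ G. -/

import Mathlib

/-!
`T` is the intersection of `M` with the preimage of `H₀` under `a ↦ aΩ`. Both pieces are closed in
the weak operator topology: `M` is its own double commutant, and `H₀ = H₀ᗮᗮ` is cut out by the
WOT-continuous conditions `⟪y, aΩ⟫ = 0`, `y ∈ H₀ᗮ`. Each `U_g` sends an eigenvector with character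
`χ` to one with character `h ↦ χ (g⁻¹ h g)`, so it preserves `H₀`; since moreover `U_g Ω = Ω` and
`θ_g(M) = M`, `θ_g` maps `T` into itself, and `θ_{g⁻¹} = θ_g⁻¹` gives equality.
-/

noncomputable section

/-- Conjugation of a bounded operator by a unitary (surjective linear isometry). -/
def conjAct {H : Type*} [NormedAddCommGroup H] [InnerProductSpace ℂ H]
    (u : H ≃ₗᵢ[ℂ] H) (a : H →L[ℂ] H) : H →L[ℂ] H :=
  u.toLinearIsometry.toContinuousLinearMap ∘L a ∘L
    u.symm.toLinearIsometry.toContinuousLinearMap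

namespace ContinuousLinearMapWOT

variable {𝕜 E : Type*} [RCLike 𝕜] [NormedAddCommGroup E] [NormedSpace 𝕜 E]

lemma image_ofCLM {F : Type*} [NormedAddCommGroup F] [NormedSpace 𝕜 F] (s : Set (E →L[𝕜] F)) :
    (ofCLM : (E →L[𝕜] F) → (E →WOT[𝕜] F)) '' s = toCLM ⁻¹' s :=
  (equiv ..).symm.image_eq_preimage_symm s

lemma isClosed_setOf_commute_toCLM (m : E →L[𝕜] E) :
    IsClosed {b : E →WOT[𝕜] E | Commute m (toCLM b)} := by
  have h : {b : E →WOT[𝕜] E | Commute m (toCLM b)} =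
      ⋂ (x : E) (y : StrongDual 𝕜 E), {b | (y ∘L m) (b x) = y (b (m x))} := by
    ext b
    simp only [Set.mem_ofPred_eq, Set.mem_iInter]
    rw [commute_iff_eq, ContinuousLinearMap.ext_iff]
    exact forall_congr' fun x => SeparatingDual.eq_iff_forall_dual_eq
  rw [h]
  exact isClosed_iInter fun x => isClosed_iInter fun y =>
    isClosed_eq (continuous_dual_apply x _) (continuous_dual_apply (m x) y)

lemma isClosed_preimage_toCLM_centralizer (S : Set (E →L[𝕜] E)) :
    IsClosed (toCLM ⁻¹' Set.centralizer S : Set (E →WOT[𝕜] E)) := by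
  have h : toCLM ⁻¹' Set.centralizer S = ⋂ m ∈ S, {b : E →WOT[𝕜] E | Commute m (toCLM b)} := by
    ext b
    simp only [Set.mem_preimage, Set.mem_iInter]
    rfl
  rw [h]
  exact isClosed_biInter fun m _ => isClosed_setOf_commute_toCLM m

lemma isClosed_preimage_toCLM_setOf_apply_mem {F : Type*} [NormedAddCommGroup F]
    [InnerProductSpace 𝕜 F] [CompleteSpace F] (x : E) {K : Submodule 𝕜 F}
    (hK : IsClosed (K : Set F)) :
    IsClosed (toCLM ⁻¹' {a : E →L[𝕜] F | a x ∈ K} : Set (E →WOT[𝕜] F)) := by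
  have h : toCLM ⁻¹' {a : E →L[𝕜] F | a x ∈ K} =
      ⋂ y ∈ Kᗮ, {b : E →WOT[𝕜] F | innerSL 𝕜 y (b x) = 0} := by
    ext b
    simp only [Set.mem_preimage, Set.mem_iInter, Set.mem_ofPred_eq, innerSL_apply_apply,
      toCLM_apply]
    conv_lhs => rw [← hK.submodule_topologicalClosure_eq,
      ← Submodule.orthogonal_orthogonal_eq_closure]
    exact Submodule.mem_orthogonal _ _
  rw [h]
  exact isClosed_biInter fun y _ => isClosed_eq (continuous_dual_apply x _) continuous_const

end ContinuousLinearMapWOT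

lemma VonNeumannAlgebra.isClosed_image_ofCLM {H : Type*} [NormedAddCommGroup H]
    [InnerProductSpace ℂ H] [CompleteSpace H] (M : VonNeumannAlgebra H) :
    IsClosed (ContinuousLinearMapWOT.ofCLM '' (M : Set (H →L[ℂ] H))) := by
  rw [ContinuousLinearMapWOT.image_ofCLM, ← M.centralizer_centralizer]
  exact ContinuousLinearMapWOT.isClosed_preimage_toCLM_centralizer _

section Eigenvectors

variable {𝕜 E G : Type*} [NormedField 𝕜] [SeminormedAddCommGroup E] [NormedSpace 𝕜 E] [Group G]

def eigenvectors (U : G →* (E ≃ₗᵢ[𝕜] E)) : Set E :=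
  {y | y ≠ 0 ∧ ∃ χ : G → 𝕜, ∀ g, U g y = χ g • y}

lemma mapsTo_eigenvectors (U : G →* (E ≃ₗᵢ[𝕜] E)) (g : G) :
    Set.MapsTo (U g) (eigenvectors U) (eigenvectors U) := by
  rintro y ⟨hy, χ, hχ⟩
  refine ⟨(U g).map_ne_zero_iff.2 hy, fun h => χ (g⁻¹ * h * g), fun h => ?_⟩
  calc U h (U g y) = U (h * g) y := by rw [map_mul]; rfl
    _ = U g (U (g⁻¹ * h * g) y) := by rw [show h * g = g * (g⁻¹ * h * g) by group, map_mul]; rfl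
    _ = χ (g⁻¹ * h * g) • U g y := by rw [hχ, map_smul]

lemma mapsTo_topologicalClosure_span_eigenvectors (U : G →* (E ≃ₗᵢ[𝕜] E)) (g : G) :
    Set.MapsTo (U g) (Submodule.span 𝕜 (eigenvectors U)).topologicalClosure
      (Submodule.span 𝕜 (eigenvectors U)).topologicalClosure := by
  refine Submodule.topologicalClosure_mem_invtSubmodule
    (f := ((U g : E ≃L[𝕜] E) : E →L[𝕜] E)) ?_
  rw [Module.End.mem_invtSubmodule, Submodule.span_le]
  exact fun y hy => Submodule.subset_span (mapsTo_eigenvectors U g hy)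

end Eigenvectors

section ConjAct

variable {H : Type*} [NormedAddCommGroup H] [InnerProductSpace ℂ H]

lemma conjAct_apply (u : H ≃ₗᵢ[ℂ] H) (a : H →L[ℂ] H) (x : H) :
    conjAct u a x = u (a (u.symm x)) :=
  rfl

lemma invOn_conjAct_symm (u : H ≃ₗᵢ[ℂ] H) (s : Set (H →L[ℂ] H)) :
    Set.InvOn (conjAct u.symm) (conjAct u) s s :=
  ⟨fun a _ => by ext x; simp [conjAct_apply], fun a _ => by ext x; simp [conjAct_apply]⟩

lemma conjAct_image_eq {u : H ≃ₗᵢ[ℂ] H} {s : Set (H →L[ℂ] H)}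
    (hu : Set.MapsTo (conjAct u) s s) (hu' : Set.MapsTo (conjAct u.symm) s s) :
    conjAct u '' s = s :=
  ((invOn_conjAct_symm u s).bijOn hu hu').image_eq

lemma mapsTo_conjAct_setOf_mem_apply_mem {u : H ≃ₗᵢ[ℂ] H} {M : Set (H →L[ℂ] H)} {Ω : H}
    {K : Set H} (hM : Set.MapsTo (conjAct u) M M) (hΩ : u Ω = Ω) (hK : Set.MapsTo u K K) :
    Set.MapsTo (conjAct u) {a | a ∈ M ∧ a Ω ∈ K} {a | a ∈ M ∧ a Ω ∈ K} := by
  rintro a ⟨haM, haK⟩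
  refine ⟨hM haM, ?_⟩
  rw [conjAct_apply, u.symm_apply_eq.2 hΩ.symm]
  exact hK haK

end ConjAct

theorem eigenvector_part_weakly_closed_invariant_subspace_general
    {H : Type*} [NormedAddCommGroup H] [InnerProductSpace ℂ H] [CompleteSpace H]
    {G : Type*} [Group G]
    (M : VonNeumannAlgebra H) (Ω : H)
    (U : G →* (H ≃ₗᵢ[ℂ] H)) (hUΩ : ∀ g, U g Ω = Ω)
    (hUM : ∀ g, conjAct (U g) '' (M : Set (H →L[ℂ] H)) = (M : Set (H →L[ℂ] H)))
    (H₀ : Submodule ℂ H)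
    (hH₀ : H₀ = (Submodule.span ℂ
        {y : H | y ≠ 0 ∧ ∃ χ : G → ℂ, ∀ g, U g y = χ g • y}).topologicalClosure)
    (T : Set (H →L[ℂ] H))
    (hT : T = {a : H →L[ℂ] H | a ∈ M ∧ a Ω ∈ H₀}) :
    ((0 : H →L[ℂ] H) ∈ T ∧
      (∀ a ∈ T, ∀ b ∈ T, a + b ∈ T) ∧ (∀ c : ℂ, ∀ a ∈ T, c • a ∈ T)) ∧
    IsClosed ((ContinuousLinearMapWOT.ofCLM : (H →L[ℂ] H) → (H →WOT[ℂ] H)) '' T) ∧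
    ∀ g, conjAct (U g) '' T = T := by
  have hUT (g : G) : Set.MapsTo (conjAct (U g)) T T :=
    hT ▸ mapsTo_conjAct_setOf_mem_apply_mem
      (Set.mapsTo_iff_image_subset.2 (hUM g).le) (hUΩ g)
      (hH₀ ▸ mapsTo_topologicalClosure_span_eigenvectors U g)
  refine ⟨?_, ?_, fun g => conjAct_image_eq (hUT g) ?_⟩
  · obtain ⟨S, rfl⟩ : ∃ S : Submodule ℂ (H →L[ℂ] H), T = S :=
      ⟨Subalgebra.toSubmodule M.toStarSubalgebra.toSubalgebra ⊓
        H₀.comap (ContinuousLinearMap.apply ℂ H Ω).toLinearMap, hT⟩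
    exact ⟨S.zero_mem, fun _ ha _ hb => S.add_mem ha hb, fun c _ ha => S.smul_mem c ha⟩
  · have hH₀closed : IsClosed (H₀ : Set H) := hH₀ ▸ Submodule.isClosed_topologicalClosure _
    have hMclosed := M.isClosed_image_ofCLM
    rw [ContinuousLinearMapWOT.image_ofCLM] at hMclosed ⊢
    exact hT ▸ hMclosed.inter
      (ContinuousLinearMapWOT.isClosed_preimage_toCLM_setOf_apply_mem Ω hH₀closed)
  · simpa only [map_inv, LinearIsometryEquiv.inv_def] using hUT g⁻¹

theorem eigenvector_part_weakly_closed_invariant_subspace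
    {H : Type*} [NormedAddCommGroup H] [InnerProductSpace ℂ H] [CompleteSpace H]
    {G : Type*} [Group G]
    (M : VonNeumannAlgebra H) (Ω : H) (hΩ : ‖Ω‖ = 1)
    (hcyc : Dense ((fun a : H →L[ℂ] H => a Ω) '' (M : Set (H →L[ℂ] H))))
    (hsep : ∀ a ∈ M, a Ω = 0 → a = 0)
    (U : G →* (H ≃ₗᵢ[ℂ] H)) (hUΩ : ∀ g, U g Ω = Ω)
    (hUM : ∀ g, conjAct (U g) '' (M : Set (H →L[ℂ] H)) = (M : Set (H →L[ℂ] H)))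
    (H₀ : Submodule ℂ H)
    (hH₀ : H₀ = (Submodule.span ℂ
        {y : H | y ≠ 0 ∧ ∃ χ : G → ℂ, ∀ g, U g y = χ g • y}).topologicalClosure)
    (T : Set (H →L[ℂ] H))
    (hT : T = {a : H →L[ℂ] H | a ∈ M ∧ a Ω ∈ H₀}) :
    ((0 : H →L[ℂ] H) ∈ T ∧
      (∀ a ∈ T, ∀ b ∈ T, a + b ∈ T) ∧ (∀ c : ℂ, ∀ a ∈ T, c • a ∈ T)) ∧
    IsClosed ((ContinuousLinearMapWOT.ofCLM : (H →L[ℂ] H) → (H →WOT[ℂ] H)) '' T) ∧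
    ∀ g, conjAct (U g) '' T = T :=
  eigenvector_part_weakly_closed_invariant_subspace_general M Ω U hUΩ hUM H₀ hH₀ T hT
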